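/- arXiv:1803.03616 — 4 statements merged into one kernel-verified Lean document; each statement's English description precedes it below -/
import Mathlib

section
/- Let 0 < A_avg < A_max, let p = A_avg/A_max, and define g(β) = ((1-p)·β² + p·A_max²) / ((1-p)·β + p·A_max) for β ≥ 0. Then the function h(β) = β - g(β)/2 is strictly increasing on [0, ∞); in fact its derivative is greater than 1/2 everywhere on [0,∞). -/
/-!
Writing `q = 1 - p`, `r = p A_max`, `s = p A_max²`, the quotient rule gives
`g'(β) = 1 - (r² + q s) / (q β + r)²`, and `r² + q s = p A_max² > 0`.
Hence `h' = 1/2 + (r² + q s) / (2 (q β + r)²) > 1/2` wherever the denominator is nonzero,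
which it is on `[0, ∞)` since `q ≥ 0` and `r > 0`.
-/

section QuadraticOverLinear

variable (q r s : ℝ)

theorem hasDerivAt_quadratic_div_linear {β : ℝ} (hβ : q * β + r ≠ 0) :
    HasDerivAt (fun x => (q * x ^ 2 + s) / (q * x + r))
      (1 - (r ^ 2 + q * s) / (q * β + r) ^ 2) β := by
  have hnum : HasDerivAt (fun x => q * x ^ 2 + s) (q * (2 * β)) β := by
    simpa using ((hasDerivAt_pow 2 β).const_mul q).add_const s
  have hden : HasDerivAt (fun x => q * x + r) q β := by
    simpa using ((hasDerivAt_id β).const_mul q).add_const r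
  refine (hnum.div hden hβ).congr_deriv ?_
  field_simp
  ring

theorem hasDerivAt_sub_half_quadratic_div_linear {β : ℝ} (hβ : q * β + r ≠ 0) :
    HasDerivAt (fun x => x - (q * x ^ 2 + s) / (q * x + r) / 2)
      (1 / 2 + (r ^ 2 + q * s) / (2 * (q * β + r) ^ 2)) β := by
  refine ((hasDerivAt_id β).sub
    ((hasDerivAt_quadratic_div_linear q r s hβ).div_const 2)).congr_deriv ?_
  field_simp
  ring

variable {q r s}

theorem one_half_lt_deriv_sub_half_quadratic_div_linear (hqrs : 0 < r ^ 2 + q * s) {β : ℝ}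
    (hβ : q * β + r ≠ 0) :
    1 / 2 < deriv (fun x => x - (q * x ^ 2 + s) / (q * x + r) / 2) β := by
  rw [(hasDerivAt_sub_half_quadratic_div_linear q r s hβ).deriv]
  have : 0 < (r ^ 2 + q * s) / (2 * (q * β + r) ^ 2) := by positivity
  linarith

theorem strictMonoOn_sub_half_quadratic_div_linear (hq : 0 ≤ q) (hr : 0 < r)
    (hqrs : 0 < r ^ 2 + q * s) :
    StrictMonoOn (fun x => x - (q * x ^ 2 + s) / (q * x + r) / 2) (Set.Ici 0) := by
  have hden : ∀ β ∈ Set.Ici (0 : ℝ), q * β + r ≠ 0 := fun β (hβ : 0 ≤ β) => by positivity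
  have hderiv : ∀ β ∈ Set.Ici (0 : ℝ), HasDerivAt _ _ β := fun β hβ =>
    hasDerivAt_sub_half_quadratic_div_linear q r s (hden β hβ)
  refine strictMonoOn_of_deriv_pos (convex_Ici 0)
    (fun β hβ => (hderiv β hβ).continuousAt.continuousWithinAt) fun β hβ => ?_
  rw [interior_Ici] at hβ
  exact one_half_pos.trans
    (one_half_lt_deriv_sub_half_quadratic_div_linear hqrs (hden β (Set.Ioi_subset_Ici_self hβ)))

end QuadraticOverLinear

theorem stmt_2 (A_avg A_max : ℝ) (h0 : 0 < A_avg) (h1 : A_avg < A_max) :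
    let p := A_avg / A_max
    let g : ℝ → ℝ := fun β =>
      ((1 - p) * β ^ 2 + p * A_max ^ 2) / ((1 - p) * β + p * A_max)
    let h : ℝ → ℝ := fun β => β - g β / 2
    StrictMonoOn h (Set.Ici 0) ∧ ∀ β ∈ Set.Ici (0 : ℝ), 1 / 2 < deriv h β := by
  intro p g h
  have hA : 0 < A_max := h0.trans h1
  have hp : 0 < p := div_pos h0 hA
  have hq : 0 ≤ 1 - p := sub_nonneg.2 ((div_lt_one hA).2 h1).le
  have hr : 0 < p * A_max := mul_pos hp hA
  have hqrs : 0 < (p * A_max) ^ 2 + (1 - p) * (p * A_max ^ 2) := by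
    have : (p * A_max) ^ 2 + (1 - p) * (p * A_max ^ 2) = p * A_max ^ 2 := by ring
    rw [this]
    positivity
  refine ⟨strictMonoOn_sub_half_quadratic_div_linear hq hr hqrs, fun β (hβ : 0 ≤ β) => ?_⟩
  exact one_half_lt_deriv_sub_half_quadratic_div_linear hqrs (by positivity)
end

section
/- Let 0 < A_avg < A_max, p = A_avg/A_max, β* = (√A_avg/(√A_max + √A_avg))·A_max, and g(β) = ((1-p)·β² + p·A_max²)/((1-p)·β + p·A_max). Then g(β*) = 2β*, and for every β > β* we have g(β) < 2β. -/
theorem stmt_3 (A_avg A_max : ℝ) (h0 : 0 < A_avg) (h1 : A_avg < A_max) :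
    let p := A_avg / A_max
    let βstar := (Real.sqrt A_avg / (Real.sqrt A_max + Real.sqrt A_avg)) * A_max
    let g : ℝ → ℝ := fun β =>
      ((1 - p) * β ^ 2 + p * A_max ^ 2) / ((1 - p) * β + p * A_max)
    g βstar = 2 * βstar ∧ ∀ β : ℝ, βstar < β → g β < 2 * β := by
  intro p βstar g
  have hA : 0 < A_max := h0.trans h1
  have hs0 : 0 < Real.sqrt A_avg := Real.sqrt_pos.2 h0
  have ht0 : 0 < Real.sqrt A_max := Real.sqrt_pos.2 hA
  have hs2 : Real.sqrt A_avg ^ 2 = A_avg := Real.sq_sqrt h0.le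
  have ht2 : Real.sqrt A_max ^ 2 = A_max := Real.sq_sqrt hA.le
  set s := Real.sqrt A_avg
  set t := Real.sqrt A_max
  have hst : s < t := Real.sqrt_lt_sqrt h0.le h1
  have hts : 0 < t + s := by linarith
  have hp : p = s ^ 2 / t ^ 2 := by rw [hs2, ht2]
  have hp0 : 0 < p := div_pos h0 hA
  have hp1 : p < 1 := (div_lt_one hA).2 h1
  have hβ : βstar = s * t ^ 2 / (t + s) := by
    show s / (t + s) * A_max = _
    rw [← ht2]; ring
  have hβpos : 0 < βstar := by
    rw [hβ]; positivity
  have key : (1 - p) * βstar ^ 2 + 2 * p * A_max * βstar - p * A_max ^ 2 = 0 := by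
    rw [hβ, hp, ← ht2]
    field_simp
    ring
  have hD : ∀ β : ℝ, βstar ≤ β → 0 < (1 - p) * β + p * A_max := by
    intro β hb
    have : 0 < β := lt_of_lt_of_le hβpos hb
    nlinarith
  constructor
  · have hd := hD βstar le_rfl
    show _ / _ = _
    rw [div_eq_iff (ne_of_gt hd)]
    nlinarith [key]
  · intro β hb
    have hd := hD β hb.le
    show _ / _ < _
    rw [div_lt_iff₀ hd]
    nlinarith [key, mul_pos (sub_pos.2 hb) hβpos, sq_nonneg (β - βstar),
      mul_pos hp0 hA]
end

section
/- Let A_max > 0, 0 < A_avg ≤ A_max, and β ≥ 0. Among all probability measures μ on [0, A_max] with mean at most A_avg, the two-point measure μ* = (1 - A_avg/A_max)·δ₀ + (A_avg/A_max)·δ_{A_max} maximizes the ratio (∫ max{β,a}² dμ(a)) / (∫ max{β,a} dμ(a)). -/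
open MeasureTheory

theorem stmt_5 (A_avg A_max β : ℝ) (hmax : 0 < A_max) (h0 : 0 < A_avg)
    (h1 : A_avg ≤ A_max) (hβ : 0 ≤ β) :
    let μstar : Measure ℝ :=
      ENNReal.ofReal (1 - A_avg / A_max) • Measure.dirac 0 +
        ENNReal.ofReal (A_avg / A_max) • Measure.dirac A_max
    ∀ μ : Measure ℝ, IsProbabilityMeasure μ → μ (Set.Icc 0 A_max)ᶜ = 0 →
      (∫ a, a ∂μ) ≤ A_avg →
      (∫ a, max β a ^ 2 ∂μ) / (∫ a, max β a ∂μ) ≤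
        (∫ a, max β a ^ 2 ∂μstar) / (∫ a, max β a ∂μstar) := by
  intro μstar μ hprob hsupp hmean
  set p : ℝ := A_avg / A_max with hp_def
  have hp0 : 0 < p := div_pos h0 hmax
  have hp1 : p ≤ 1 := (div_le_one hmax).mpr h1
  set M : ℝ := max β A_max with hM_def
  have hMpos : 0 < M := lt_of_lt_of_le hmax (le_max_right _ _)
  have hβM : β ≤ M := le_max_left _ _
  set N : ℝ := (1 - p) * β ^ 2 + p * M ^ 2 with hN_def
  set D : ℝ := (1 - p) * β + p * M with hD_def
  have hDpos : 0 < D := by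
    have h1' : 0 ≤ (1 - p) * β := mul_nonneg (by linarith) hβ
    nlinarith [mul_pos hp0 hMpos]
  have hN0 : 0 ≤ N := by
    have : 0 ≤ (1 - p) * β ^ 2 := mul_nonneg (by linarith) (sq_nonneg β)
    nlinarith [mul_nonneg hp0.le (sq_nonneg M)]
  -- integrals against μstar
  have hdint : ∀ (x : ℝ) (g : ℝ → ℝ), Integrable g (Measure.dirac x) :=
    fun x g => (integrable_const (g x)).congr (ae_eq_dirac g).symm
  have hstar : ∀ g : ℝ → ℝ, ∫ a, g a ∂μstar = (1 - p) * g 0 + p * g A_max := by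
    intro g
    show (∫ a, g a
        ∂(ENNReal.ofReal (1 - p) • Measure.dirac 0 +
          ENNReal.ofReal p • Measure.dirac A_max)) = _
    rw [integral_add_measure ((hdint 0 g).smul_measure ENNReal.ofReal_ne_top)
        ((hdint A_max g).smul_measure ENNReal.ofReal_ne_top),
      integral_smul_measure, integral_smul_measure, integral_dirac, integral_dirac,
      ENNReal.toReal_ofReal (by linarith), ENNReal.toReal_ofReal hp0.le]
    rfl
  have hstar1 : (∫ a, max β a ∂μstar) = D := by
    rw [hstar]
    simp only [hD_def]
    rw [max_eq_left hβ, ← hM_def]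
  have hstar2 : (∫ a, max β a ^ 2 ∂μstar) = N := by
    rw [hstar]
    simp only [hN_def]
    rw [max_eq_left hβ, ← hM_def]
  rw [hstar1, hstar2]
  -- a.e. membership in the interval
  have hae : ∀ᵐ a ∂μ, a ∈ Set.Icc 0 A_max := by
    rw [MeasureTheory.ae_iff]
    exact hsupp
  -- integrability
  have hmeas1 : AEStronglyMeasurable (fun a : ℝ => max β a) μ :=
    (continuous_const.max continuous_id).aestronglyMeasurable
  have hmeas2 : AEStronglyMeasurable (fun a : ℝ => max β a ^ 2) μ :=
    ((continuous_const.max continuous_id).pow 2).aestronglyMeasurable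
  have hbound1 : ∀ᵐ a ∂μ, ‖max β a‖ ≤ M := by
    filter_upwards [hae] with a ha
    rw [Real.norm_eq_abs, abs_of_nonneg (le_trans hβ (le_max_left _ _))]
    exact max_le_max le_rfl ha.2
  have hint1 : Integrable (fun a : ℝ => max β a) μ :=
    Integrable.mono' (integrable_const M) hmeas1 hbound1
  have hint2 : Integrable (fun a : ℝ => max β a ^ 2) μ := by
    refine Integrable.mono' (integrable_const (M ^ 2)) hmeas2 ?_
    filter_upwards [hae] with a ha
    have h1' : 0 ≤ max β a := le_trans hβ (le_max_left _ _)
    have h2' : max β a ≤ M := max_le_max le_rfl ha.2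
    rw [Real.norm_eq_abs, abs_of_nonneg (pow_nonneg h1' 2)]
    exact pow_le_pow_left₀ h1' h2' 2
  have hintid : Integrable (fun a : ℝ => a) μ := by
    refine Integrable.mono' (integrable_const A_max) aestronglyMeasurable_id ?_
    filter_upwards [hae] with a ha
    rw [Real.norm_eq_abs, abs_of_nonneg ha.1]
    exact ha.2
  -- the slope
  set c : ℝ := β * M * (M - β) / A_max with hc_def
  have hc0 : 0 ≤ c :=
    div_nonneg (mul_nonneg (mul_nonneg hβ hMpos.le) (by linarith)) hmax.le
  -- pointwise inequality
  have hAne : A_max ≠ 0 := hmax.ne'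
  have hpt : ∀ a ∈ Set.Icc (0:ℝ) A_max,
      D * max β a ^ 2 ≤ N * max β a + c * a - c * A_avg := by
    intro a ha
    have hAavg : c * A_avg = β * M * (M - β) * p := by
      rw [hc_def, hp_def]; field_simp
    rcases le_or_gt a β with hab | hab
    · rw [max_eq_left hab]
      have h1' : 0 ≤ c * a := mul_nonneg hc0 ha.1
      have hid : D * β ^ 2 - N * β = -(β * M * (M - β) * p) := by
        rw [hN_def, hD_def]; ring
      linarith
    · rw [max_eq_right hab.le]
      have hβA : β < A_max := lt_of_lt_of_le hab ha.2
      have hM' : M = A_max := max_eq_right hβA.le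
      have hcA : c = β * (A_max - β) := by
        rw [hc_def, hM']; field_simp
      have hpA : p * A_max = A_avg := by
        rw [hp_def]; field_simp
      have key : (A_max - β) * (N * a + c * a - c * A_avg - D * a ^ 2) =
          (A_max - a) * (c * β) + D * (a - β) * (A_max - a) * (A_max - β) := by
        rw [hN_def, hD_def, hM', hcA, ← hpA]; ring
      have hnn : 0 ≤ (A_max - a) * (c * β) + D * (a - β) * (A_max - a) * (A_max - β) :=
        add_nonneg (mul_nonneg (by linarith [ha.2]) (mul_nonneg hc0 hβ))
          (mul_nonneg (mul_nonneg (mul_nonneg hDpos.le (by linarith)) (by linarith [ha.2]))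
            (by linarith))
      have hprod : 0 ≤ (A_max - β) * (N * a + c * a - c * A_avg - D * a ^ 2) := key ▸ hnn
      nlinarith [hprod, show (0:ℝ) < A_max - β by linarith]
  -- integrate the pointwise inequality
  have hR1 : Integrable (fun a : ℝ => N * max β a) μ := hint1.const_mul N
  have hR2 : Integrable (fun a : ℝ => c * a) μ := hintid.const_mul c
  have hR' : Integrable (fun a : ℝ => N * max β a + c * a) μ := hR1.add hR2
  have hkey : D * (∫ a, max β a ^ 2 ∂μ) ≤ N * (∫ a, max β a ∂μ) := by
    have hL : Integrable (fun a : ℝ => D * max β a ^ 2) μ := hint2.const_mul D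
    have hR : Integrable (fun a : ℝ => N * max β a + c * a - c * A_avg) μ :=
      hR'.sub (integrable_const _)
    have hmono := integral_mono_ae hL hR (by
      filter_upwards [hae] with a ha
      exact hpt a ha)
    have e1 : (∫ a, (N * max β a + c * a - c * A_avg) ∂μ) =
        N * (∫ a, max β a ∂μ) + c * (∫ a, a ∂μ) - c * A_avg := by
      rw [integral_sub hR' (integrable_const _), integral_add hR1 hR2,
        integral_const_mul, integral_const_mul, integral_const]
      simp [measure_univ]
    rw [e1, integral_const_mul] at hmono
    have hca : c * (∫ a, a ∂μ) ≤ c * A_avg := mul_le_mul_of_nonneg_left hmean hc0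
    linarith
  -- conclude
  have hintf0 : 0 ≤ ∫ a, max β a ∂μ :=
    integral_nonneg fun a => le_trans hβ (le_max_left _ _)
  rcases eq_or_lt_of_le hintf0 with hz | hz
  · rw [← hz, div_zero]
    exact div_nonneg hN0 hDpos.le
  · rw [div_le_div_iff₀ hz hDpos]
    linarith
end

section
/- Let 0 < A_avg < A_max and p = A_avg/A_max. Define F(β) = ((1-p)β² + p·A_max²)/(2·((1-p)β + p·A_max)) for β ∈ [0, A_max]. Then F is a contraction-like map in the sense that F has exactly one fixed point in [0, A_max], namely β* = (√A_avg/(√A_max+√A_avg))·A_max, and F(β) > β for β < β* while F(β) < β for β > β* (within [0, A_max]). -/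
/-!
Writing `F β = (q β² + c) / (2 (q β + b))` with `q = 1 - p ≥ 0`, `b = p A_max > 0`, `c = p A_max²`,
the numerator of `F β - β` is the concave quadratic `c - 2 b β - q β²`. Since `β*` is its
nonnegative root, it factors as `(β* - β) (2 b + q (β + β*))` with a positive second factor, so
`F β - β` has the sign of `β* - β` on `β ≥ 0`.
-/

noncomputable def waterLevelMap (q b c β : ℝ) : ℝ :=
  (q * β ^ 2 + c) / (2 * (q * β + b))

section WaterLevelMap

variable {q b c s β : ℝ}

lemma waterLevelMap_sub_self (hden : q * β + b ≠ 0) (hs : q * s ^ 2 + 2 * b * s = c) :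
    waterLevelMap q b c β - β = (s - β) * ((2 * b + q * (β + s)) / (2 * (q * β + b))) := by
  unfold waterLevelMap
  field_simp
  linear_combination -hs

lemma sign_waterLevelMap_sub_self (hq : 0 ≤ q) (hb : 0 < b) (hs0 : 0 ≤ s) (hβ : 0 ≤ β)
    (hs : q * s ^ 2 + 2 * b * s = c) :
    SignType.sign (waterLevelMap q b c β - β) = SignType.sign (s - β) := by
  have hden : 0 < q * β + b := by positivity
  have hfactor : 0 < (2 * b + q * (β + s)) / (2 * (q * β + b)) := by positivity
  rw [waterLevelMap_sub_self hden.ne' hs, sign_mul, sign_pos hfactor, mul_one]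

end WaterLevelMap

section OptimalWaterLevel

variable {a M : ℝ}

lemma optimalWaterLevel_mem_Icc (hM : 0 ≤ M) :
    √a / (√M + √a) * M ∈ Set.Icc 0 M := by
  refine ⟨by positivity, mul_le_of_le_one_left hM ?_⟩
  exact div_le_one_of_le₀ (le_add_of_nonneg_left (Real.sqrt_nonneg M)) (by positivity)

lemma optimalWaterLevel_isRoot (ha : 0 ≤ a) (hM : 0 < M) :
    (1 - a / M) * (√a / (√M + √a) * M) ^ 2 + 2 * (a / M * M) * (√a / (√M + √a) * M)
      = a / M * M ^ 2 := by
  have hsum : 0 < √M + √a := by positivity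
  field_simp
  linear_combination M * Real.sq_sqrt ha - a * Real.sq_sqrt hM.le

end OptimalWaterLevel

theorem stmt_18 (A_avg A_max : ℝ) (h0 : 0 < A_avg) (h1 : A_avg < A_max) :
    let p := A_avg / A_max
    let βstar := (Real.sqrt A_avg / (Real.sqrt A_max + Real.sqrt A_avg)) * A_max
    let F : ℝ → ℝ := fun β =>
      ((1 - p) * β ^ 2 + p * A_max ^ 2) / (2 * ((1 - p) * β + p * A_max))
    βstar ∈ Set.Icc 0 A_max ∧ F βstar = βstar ∧
      (∀ β ∈ Set.Icc (0:ℝ) A_max, F β = β → β = βstar) ∧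
      (∀ β ∈ Set.Icc (0:ℝ) A_max, β < βstar → β < F β) ∧
      (∀ β ∈ Set.Icc (0:ℝ) A_max, βstar < β → F β < β) := by
  intro p βstar F
  have hM : 0 < A_max := h0.trans h1
  have hmem : βstar ∈ Set.Icc 0 A_max := optimalWaterLevel_mem_Icc hM.le
  have hsign : ∀ β ∈ Set.Icc (0:ℝ) A_max, SignType.sign (F β - β) = SignType.sign (βstar - β) :=
    fun β hβ => sign_waterLevelMap_sub_self (sub_nonneg.2 ((div_le_one hM).2 h1.le))
      (mul_pos (div_pos h0 hM) hM) hmem.1 hβ.1 (optimalWaterLevel_isRoot h0.le hM)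
  refine ⟨hmem, ?_, fun β hβ hfix => ?_, fun β hβ hlt => ?_, fun β hβ hlt => ?_⟩
  · simpa [sub_eq_zero] using hsign βstar hmem
  · have h := hsign β hβ
    rw [hfix, sub_self, sign_zero, eq_comm, sign_eq_zero_iff, sub_eq_zero] at h
    exact h.symm
  · have h := hsign β hβ
    rw [sign_pos (sub_pos.2 hlt), sign_eq_one_iff] at h
    exact sub_pos.1 h
  · have h := hsign β hβ
    rw [sign_neg (sub_neg.2 hlt), sign_eq_neg_one_iff] at h
    exact sub_neg.1 h
end
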